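/- Let 𝒜 be a linear map on ℝ^{M×W} with operator norm ‖𝒜‖ ≤ √(W/Ω) (w.r.t. Frobenius norm on the domain and ℓ₂ norm on the range), and suppose ‖P_T 𝒜*𝒜 P_T − P_T‖ ≤ 1/2. Then for every Z ∈ ker(𝒜), ‖P_{T⊥}(Z)‖_F ≥ √(Ω/(2W))·‖P_T(Z)‖_F. -/

import Mathlib

/-!
For `x = P Z`, self-adjointness of `P` gives `⟪x, (P 𝒜* 𝒜 P - P) x⟫ = ‖𝒜 x‖² - ‖x‖²`, so the
hypothesis `‖P 𝒜* 𝒜 P - P‖ ≤ 1/2` yields `‖𝒜 x‖² ≥ ‖x‖² / 2`. Since `𝒜 Z = 0`, we have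
`𝒜 x = -𝒜 (Z - P Z)`, whose norm is at most `√(W/Ω) ‖Z - P Z‖`.
-/

open ContinuousLinearMap

section

variable {E F : Type*} [NormedAddCommGroup E] [InnerProductSpace ℝ E] [CompleteSpace E]
  [NormedAddCommGroup F] [InnerProductSpace ℝ F] [CompleteSpace F]

theorem inner_compress_adjoint_comp_sub_self {A : E →L[ℝ] F} {P : E →L[ℝ] E}
    (hP : IsSelfAdjoint P) {x : E} (hx : P x = x) :
    inner ℝ x ((P.comp ((adjoint A).comp (A.comp P)) - P) x) = ‖A x‖ ^ 2 - ‖x‖ ^ 2 := by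
  have hPA : inner ℝ x (P (adjoint A (A x))) = ‖A x‖ ^ 2 := by
    rw [← hP.adjoint_eq, adjoint_inner_right, hx, adjoint_inner_right,
      real_inner_self_eq_norm_sq]
  simp only [sub_apply, comp_apply, inner_sub_right, hx, hPA, real_inner_self_eq_norm_sq]

theorem sq_norm_le_of_norm_compress_adjoint_comp_sub_le {A : E →L[ℝ] F} {P : E →L[ℝ] E}
    (hP : IsSelfAdjoint P) {δ : ℝ} (hδ : ‖P.comp ((adjoint A).comp (A.comp P)) - P‖ ≤ δ)
    {x : E} (hx : P x = x) :
    (1 - δ) * ‖x‖ ^ 2 ≤ ‖A x‖ ^ 2 := by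
  set T := P.comp ((adjoint A).comp (A.comp P)) - P
  have hT : |inner ℝ x (T x)| ≤ δ * ‖x‖ ^ 2 :=
    calc |inner ℝ x (T x)| ≤ ‖x‖ * ‖T x‖ := abs_real_inner_le_norm _ _
      _ ≤ ‖x‖ * (δ * ‖x‖) := by gcongr; exact T.le_of_opNorm_le hδ x
      _ = δ * ‖x‖ ^ 2 := by ring
  have := (abs_le.mp hT).1
  rw [inner_compress_adjoint_comp_sub_self hP hx] at this
  linarith

theorem sq_norm_projection_le_of_mem_ker {A : E →L[ℝ] F} {P : E →L[ℝ] E}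
    (hPidem : P.comp P = P) (hP : IsSelfAdjoint P) {δ K : ℝ}
    (hδ : ‖P.comp ((adjoint A).comp (A.comp P)) - P‖ ≤ δ) (hA : ‖A‖ ≤ K)
    {Z : E} (hZ : A Z = 0) :
    (1 - δ) * ‖P Z‖ ^ 2 ≤ K ^ 2 * ‖Z - P Z‖ ^ 2 := by
  have hPZ : P (P Z) = P Z := by rw [← comp_apply, hPidem]
  have hAPZ : A (P Z) = -A (Z - P Z) := by rw [map_sub, hZ]; abel
  calc (1 - δ) * ‖P Z‖ ^ 2 ≤ ‖A (P Z)‖ ^ 2 :=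
        sq_norm_le_of_norm_compress_adjoint_comp_sub_le hP hδ hPZ
    _ ≤ (K * ‖Z - P Z‖) ^ 2 := by
        rw [hAPZ, norm_neg]
        gcongr
        exact A.le_of_opNorm_le hA _
    _ = K ^ 2 * ‖Z - P Z‖ ^ 2 := mul_pow _ _ _

end

theorem stmt_16_general (M W Ω L : ℕ)
    (𝒜 : EuclideanSpace ℝ (Fin M × Fin W) →L[ℝ] EuclideanSpace ℝ (Fin L))
    (P : EuclideanSpace ℝ (Fin M × Fin W) →L[ℝ] EuclideanSpace ℝ (Fin M × Fin W))
    (hPidem : P.comp P = P)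
    (hPsa : ContinuousLinearMap.adjoint P = P)
    (hAnorm : ‖𝒜‖ ≤ Real.sqrt ((W : ℝ) / Ω))
    (hinj : ‖(P.comp ((ContinuousLinearMap.adjoint 𝒜).comp (𝒜.comp P))) - P‖ ≤ 1 / 2) :
    ∀ Z : EuclideanSpace ℝ (Fin M × Fin W), 𝒜 Z = 0 →
      Real.sqrt ((Ω : ℝ) / (2 * W)) * ‖P Z‖ ≤ ‖Z - P Z‖ := by
  intro Z hZ
  have key := sq_norm_projection_le_of_mem_ker hPidem hPsa hinj hAnorm hZ
  rw [Real.sq_sqrt (by positivity)] at key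
  set c : ℝ := Ω / W
  -- `c * c⁻¹ ≤ 1` also holds for `c = 0`, where `0⁻¹ = 0`.
  have hc : (Ω : ℝ) / (2 * W) = c / 2 := by ring
  have hWΩ : (W : ℝ) / Ω = c⁻¹ := (inv_div _ _).symm
  have hsq : (c / 2) * ‖P Z‖ ^ 2 ≤ ‖Z - P Z‖ ^ 2 :=
    calc (c / 2) * ‖P Z‖ ^ 2 = c * ((1 - 1 / 2) * ‖P Z‖ ^ 2) := by ring
      _ ≤ c * (c⁻¹ * ‖Z - P Z‖ ^ 2) := by rw [← hWΩ]; gcongr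
      _ = (c * c⁻¹) * ‖Z - P Z‖ ^ 2 := by ring
      _ ≤ 1 * ‖Z - P Z‖ ^ 2 := by gcongr; exact mul_inv_le_one
      _ = ‖Z - P Z‖ ^ 2 := one_mul _
  calc Real.sqrt ((Ω : ℝ) / (2 * W)) * ‖P Z‖ = Real.sqrt ((c / 2) * ‖P Z‖ ^ 2) := by
        rw [hc, Real.sqrt_mul' _ (by positivity), Real.sqrt_sq (norm_nonneg _)]
    _ ≤ Real.sqrt (‖Z - P Z‖ ^ 2) := Real.sqrt_le_sqrt hsq
    _ = ‖Z - P Z‖ := Real.sqrt_sq (norm_nonneg _)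

/-- If `𝒜` has operator norm at most `√(W/Ω)` and
`‖P_T 𝒜* 𝒜 P_T − P_T‖ ≤ 1/2` where `P_T` is an orthogonal projection, then for every
`Z ∈ ker 𝒜`, `‖P_{T⊥}(Z)‖_F ≥ √(Ω/(2W)) ‖P_T(Z)‖_F`
(with `ℝ^{M×W}` identified with Euclidean space carrying the Frobenius norm). -/
theorem stmt_16 (M W Ω L : ℕ) (hW : 0 < W) (hΩ : 0 < Ω)
    (𝒜 : EuclideanSpace ℝ (Fin M × Fin W) →L[ℝ] EuclideanSpace ℝ (Fin L))
    (P : EuclideanSpace ℝ (Fin M × Fin W) →L[ℝ] EuclideanSpace ℝ (Fin M × Fin W))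
    (hPidem : P.comp P = P)
    (hPsa : ContinuousLinearMap.adjoint P = P)
    (hAnorm : ‖𝒜‖ ≤ Real.sqrt ((W : ℝ) / Ω))
    (hinj : ‖(P.comp ((ContinuousLinearMap.adjoint 𝒜).comp (𝒜.comp P))) - P‖ ≤ 1 / 2) :
    ∀ Z : EuclideanSpace ℝ (Fin M × Fin W), 𝒜 Z = 0 →
      Real.sqrt ((Ω : ℝ) / (2 * W)) * ‖P Z‖ ≤ ‖Z - P Z‖ :=
  stmt_16_general M W Ω L 𝒜 P hPidem hPsa hAnorm hinj
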